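/- For every finite simple graph G, the unitary capacity is at least the reversible capacity: Θ_U(G) ≥ Θ_REV(G). -/

import Mathlib

open Filter

/-- A language `L` over the vertices of `G` is distinguishable if any two distinct
equal-length words differ at some position by two non-adjacent, non-equal symbols. -/
def Distinguishable {V : Type*} (G : SimpleGraph V) (L : Set (List V)) : Prop :=
  ∀ x ∈ L, ∀ y ∈ L, x.length = y.length → x ≠ y →
    ∃ (i : ℕ) (hx : i < x.length) (hy : i < y.length),
      x.get ⟨i, hx⟩ ≠ y.get ⟨i, hy⟩ ∧ ¬ G.Adj (x.get ⟨i, hx⟩) (y.get ⟨i, hy⟩)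

/-- The growth rate of a language: `limsup |L(n)|^(1/n)`. -/
noncomputable def growthRate {V : Type*} (L : Set (List V)) : ℝ :=
  Filter.limsup (fun n : ℕ =>
    ((Set.ncard {w ∈ L | w.length = n} : ℕ) : ℝ) ^ (1 / (n : ℝ))) Filter.atTop

/-- The `n`-fold strong graph product of `G` with itself. -/
def strongPow {V : Type*} (G : SimpleGraph V) (n : ℕ) : SimpleGraph (Fin n → V) where
  Adj x y := x ≠ y ∧ ∀ i, x i = y i ∨ G.Adj (x i) (y i)
  symm := by
    refine ⟨?_⟩
    rintro x y ⟨hne, h⟩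
    exact ⟨hne.symm, fun i => (h i).imp Eq.symm (fun h' => h'.symm)⟩
  loopless := by refine ⟨?_⟩; rintro x ⟨hne, _⟩; exact hne rfl

/-- The independence number of a graph. -/
noncomputable def indepNum {V : Type*} (G : SimpleGraph V) : ℕ :=
  sSup {k | ∃ s : Set V, (s.Pairwise fun a b => ¬ G.Adj a b) ∧ s.ncard = k}

/-- The Shannon (zero-error) capacity `Θ(G) = sup_n α(G^{⊠n})^{1/n}`. -/
noncomputable def shannonCapacity {V : Type*} (G : SimpleGraph V) : ℝ :=
  ⨆ n : ℕ, ((indepNum (strongPow G (n + 1)) : ℝ)) ^ (1 / ((n : ℝ) + 1))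

/-- A reversible partial DFA: each symbol's partial transition function is injective
on its domain. -/
structure RevPartialDFA (α : Type*) where
  /-- the (finite) state space -/
  σ : Type
  /-- the state space is finite -/
  fintype : Fintype σ
  /-- partial transition function -/
  step : σ → α → Option σ
  /-- initial state -/
  start : σ
  /-- accepting states -/
  accept : Set σ
  /-- reversibility: transitions by a fixed symbol are injective where defined -/
  reversible : ∀ (a : α) (x y q : σ), step x a = some q → step y a = some q → x = y

/-- The partial evaluation of a reversible partial DFA on a word (`none` if any
transition along the word is undefined). -/
def RevPartialDFA.eval {α : Type*} (M : RevPartialDFA α) (w : List α) : Option M.σ :=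
  w.foldl (fun os a => os.bind fun s => M.step s a) (some M.start)

/-- The language accepted by a reversible partial DFA: all transitions defined and the
final state accepting. -/
def RevPartialDFA.accepts {α : Type*} (M : RevPartialDFA α) : Set (List α) :=
  {w | ∃ s ∈ M.accept, M.eval w = some s}

/-- The reversible capacity `Θ_REV(G)`: the supremum of growth rates over reversible
partial DFAs whose accepted language is distinguishable for `G`. -/
noncomputable def revCapacity {V : Type*} (G : SimpleGraph V) : ℝ :=
  sSup {r : ℝ |
    ∃ M : RevPartialDFA V, Distinguishable G M.accepts ∧ growthRate M.accepts = r}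

/-- A Kondacs–Watrous quantum finite automaton over alphabet `α`. -/
structure KWQFA (α : Type*) where
  /-- dimension of the Hilbert space -/
  d : ℕ
  /-- unitary transition matrix for each symbol -/
  U : α → Matrix (Fin d) (Fin d) ℂ
  unitary : ∀ a, U a ∈ Matrix.unitaryGroup (Fin d) ℂ
  /-- initial state -/
  init : Fin d → ℂ
  init_norm : ∑ i, Complex.normSq (init i) = 1
  /-- accepting projection -/
  A : Matrix (Fin d) (Fin d) ℂ
  /-- rejecting projection -/
  R : Matrix (Fin d) (Fin d) ℂ
  A_idem : A * A = A
  A_herm : A.IsHermitian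
  R_idem : R * R = R
  R_herm : R.IsHermitian
  AR : A * R = 0

namespace KWQFA

variable {α : Type*} (M : KWQFA α)

/-- The nonhalting projection `N = I − A − R`. -/
noncomputable def N : Matrix (Fin M.d) (Fin M.d) ℂ := 1 - M.A - M.R

/-- The accepting component of the state after reading a word:
`A (U_{s_n} N) ⋯ (U_{s_1} N) |init⟩` (first symbol applied first). -/
noncomputable def acceptVec (w : List α) : Fin M.d → ℂ :=
  M.A.mulVec (w.foldl (fun v a => (M.U a * M.N).mulVec v) M.init)

/-- The set of strings accepted with nonzero probability. -/
def accepts : Set (List α) := {w | M.acceptVec w ≠ 0}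

/-- The capacity of the automaton: growth of total acceptance probability, counting
strings weighted by their acceptance probability. -/
noncomputable def capacity [Fintype α] : ℝ :=
  Filter.limsup (fun n : ℕ =>
    (∑ w : Fin n → α, ∑ i, Complex.normSq (M.acceptVec (List.ofFn w) i)) ^ (1 / (n : ℝ)))
    Filter.atTop

end KWQFA

/-- The unitary capacity `Θ_U(G)`: the supremum of the capacities of Kondacs–Watrous
quantum finite automata whose accepted language is distinguishable for `G`. -/
noncomputable def unitaryCapacity {V : Type*} [Fintype V] (G : SimpleGraph V) : ℝ :=
  sSup {r : ℝ | ∃ M : KWQFA V, Distinguishable G M.accepts ∧ M.capacity = r}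

/-!
A reversible partial DFA is simulated by a Kondacs–Watrous automaton on two copies of its states
(live `Sum.inl`, dead `Sum.inr`) tensored with a qubit. The transition on a symbol is a partial
injection of the states; sending a state without transition to its dead copy extends it to a
permutation of the two copies, and reading the symbol applies this permutation together with a
rotation of the qubit by an angle `θ`. Only live states with qubit `0` continue, and live accepting
states with qubit `1` accept. Hence a word of length `n ≥ 1` in the DFA's language is accepted with
probability `cos²⁽ⁿ⁻¹⁾θ · sin²θ` and every other word with probability `0`: the quantum automaton
accepts a sublanguage, so it stays distinguishable, and its capacity is at least `cos²θ` times the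
growth rate. Letting `θ → 0` gives the inequality.
-/

open Matrix Topology
open scoped Matrix.Norms.L2Operator

namespace Matrix

variable {m n R : Type*}

def reindexStarAlgEquiv [Fintype m] [DecidableEq m] [Fintype n] [DecidableEq n] [CommSemiring R]
    [StarRing R] (e : m ≃ n) : Matrix m m R ≃⋆ₐ[R] Matrix n n R :=
  .ofAlgEquiv (reindexAlgEquiv R R e) fun A => (conjTranspose_reindex e e A).symm

lemma coe_reindexStarAlgEquiv [Fintype m] [DecidableEq m] [Fintype n] [DecidableEq n]
    [CommSemiring R] [StarRing R] (e : m ≃ n) :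
    ⇑(reindexStarAlgEquiv (R := R) e) = reindex e e := rfl

lemma reindex_mulVec_comp_symm [Fintype m] [Fintype n] [NonUnitalNonAssocSemiring R] (e : m ≃ n)
    (B : Matrix m m R) (v : m → R) : reindex e e B *ᵥ (v ∘ e.symm) = (B *ᵥ v) ∘ e.symm := by
  rw [reindex_apply, submatrix_mulVec_equiv, Equiv.symm_symm, Function.comp_assoc,
    e.symm_comp_self, Function.comp_id]

variable [DecidableEq m]

lemma isStarProjection_diagonal_indicator [Fintype m] [Semiring R] [StarRing R] (S : Set m) :
    IsStarProjection (diagonal (S.indicator 1) : Matrix m m R) := by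
  refine ⟨?_, ?_⟩
  · rw [IsIdempotentElem, diagonal_mul_diagonal, ← Pi.mul_def, ← Set.inter_indicator_one,
      Set.inter_self]
  · rw [IsSelfAdjoint, star_eq_conjTranspose, diagonal_conjTranspose]
    congr 1
    ext i
    by_cases h : i ∈ S <;> simp [h]

lemma diagonal_indicator_mul [Fintype m] [Semiring R] (S T : Set m) :
    (diagonal (S.indicator 1) : Matrix m m R) * diagonal (T.indicator 1)
      = diagonal ((S ∩ T).indicator 1) := by
  rw [diagonal_mul_diagonal, ← Pi.mul_def, Set.inter_indicator_one]

lemma one_sub_diagonal_indicator_sub [Ring R] {S T : Set m} (h : Disjoint S T) :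
    (1 : Matrix m m R) - diagonal (S.indicator 1) - diagonal ((S ∪ T)ᶜ.indicator 1)
      = diagonal (T.indicator 1) := by
  rw [← diagonal_one, diagonal_sub, diagonal_sub, Set.indicator_compl,
    Set.indicator_union_of_disjoint h]
  congr 1
  ext i
  by_cases hS : i ∈ S <;> by_cases hT : i ∈ T <;> simp [hS, hT]

lemma rotation_mem_unitaryGroup {c s : ℝ} (hcs : c ^ 2 + s ^ 2 = 1) :
    !![(c : ℂ), -s; s, c] ∈ unitaryGroup (Fin 2) ℂ := by
  rw [mem_unitaryGroup_iff', star_eq_conjTranspose]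
  have h : (c : ℂ) ^ 2 + (s : ℂ) ^ 2 = 1 := by exact_mod_cast hcs
  ext i j
  fin_cases i <;> fin_cases j <;> simp [mul_apply, Fin.sum_univ_two] <;>
    first | linear_combination h | ring

lemma norm_toLp_mulVec_le {𝕜 : Type*} [RCLike 𝕜] [Fintype m] {B : Matrix m m 𝕜} (hB : ‖B‖ ≤ 1)
    (v : m → 𝕜) : ‖WithLp.toLp 2 (B *ᵥ v)‖ ≤ ‖WithLp.toLp 2 v‖ :=
  calc ‖WithLp.toLp 2 (B *ᵥ v)‖ ≤ ‖B‖ * ‖WithLp.toLp 2 v‖ := B.l2_opNorm_mulVec _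
    _ ≤ ‖WithLp.toLp 2 v‖ := mul_le_of_le_one_left (norm_nonneg _) hB

end Matrix

lemma rpow_one_div_le_max_of_le_pow {x C : ℝ} {n : ℕ} (hx : 0 ≤ x) (hC : 0 ≤ C)
    (h : x ≤ C ^ n) : x ^ (1 / (n : ℝ)) ≤ max 1 C := by
  rcases n.eq_zero_or_pos with rfl | hn
  · simp
  calc x ^ (1 / (n : ℝ)) ≤ (C ^ n) ^ (1 / (n : ℝ)) := by gcongr
    _ = C := by rw [one_div, Real.pow_rpow_inv_natCast hC hn.ne']
    _ ≤ max 1 C := le_max_right _ _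

lemma tendsto_pow_pred_mul_rpow_one_div {t x : ℝ} (ht : 0 < t) (hx : 0 < x) :
    Tendsto (fun n : ℕ => (t ^ (n - 1) * x) ^ (1 / (n : ℝ))) atTop (𝓝 t) := by
  have hroot : Tendsto (fun n : ℕ => (x / t) ^ (1 / (n : ℝ))) atTop (𝓝 1) := by
    simpa [Function.comp_def] using (Real.continuousAt_const_rpow (div_pos hx ht).ne').tendsto.comp
      tendsto_one_div_atTop_nhds_zero_nat
  refine Tendsto.congr' ?_ (by simpa using hroot.const_mul t)
  filter_upwards [eventually_ge_atTop 1] with n hn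
  obtain ⟨m, rfl⟩ := Nat.exists_eq_add_of_le' hn
  rw [Nat.add_sub_cancel, show t ^ m * x = t ^ (m + 1) * (x / t) by field_simp; ring,
    Real.mul_rpow (by positivity) (by positivity), ← Real.rpow_natCast, ← Real.rpow_mul ht.le]
  simp [Nat.cast_add_one_ne_zero]

open Classical in
lemma sum_ofFn_ite_mem {V : Type*} [Fintype V] (L : Set (List V)) (n : ℕ) (x : ℝ) :
    ∑ f : Fin n → V, (if List.ofFn f ∈ L then x else 0) = {w ∈ L | w.length = n}.ncard * x := by
  have hL : {w ∈ L | w.length = n} = List.ofFn '' {f : Fin n → V | List.ofFn f ∈ L} := by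
    ext w
    constructor
    · rintro ⟨hw, rfl⟩
      exact ⟨w.get, by simpa using hw, List.ofFn_get w⟩
    · rintro ⟨f, hf, rfl⟩
      exact ⟨hf, List.length_ofFn⟩
  rw [Finset.sum_ite, Finset.sum_const_zero, add_zero, Finset.sum_const, nsmul_eq_mul, hL,
    Set.ncard_image_of_injective _ List.ofFn_injective, ← Set.ncard_coe_finset]
  simp

lemma ncard_length_eq_le {V : Type*} [Fintype V] (L : Set (List V)) (n : ℕ) :
    ({w ∈ L | w.length = n}.ncard : ℝ) ≤ Fintype.card V ^ n := by
  classical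
  calc ({w ∈ L | w.length = n}.ncard : ℝ)
      = ∑ f : Fin n → V, if List.ofFn f ∈ L then 1 else 0 := by rw [sum_ofFn_ite_mem, mul_one]
    _ ≤ ∑ _f : Fin n → V, 1 := Finset.sum_le_sum fun f _ => by split_ifs <;> norm_num
    _ = Fintype.card V ^ n := by simp

lemma Set.InjOn.exists_perm_extend {α : Type*} [Fintype α] {s : Set α} {f : α → α}
    (hf : s.InjOn f) : ∃ g : Equiv.Perm α, ∀ i ∈ s, g i = f i := by
  obtain ⟨g, hg⟩ := Set.MapsTo.exists_equiv_extend_of_card_eq (t := Finset.univ)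
    Finset.card_univ.symm (fun _ _ => Finset.mem_coe.mpr (Finset.mem_univ _)) hf
  exact ⟨g.trans (Equiv.subtypeUnivEquiv Finset.mem_univ), hg⟩

lemma Distinguishable.mono {V : Type*} {G : SimpleGraph V} {L L' : Set (List V)}
    (hL : Distinguishable G L) (h : L' ⊆ L) : Distinguishable G L' :=
  fun x hx y hy => hL x (h hx) y (h hy)

namespace KWQFA

variable {α : Type*} (M : KWQFA α)

noncomputable def acceptProb (w : List α) : ℝ := ∑ i, Complex.normSq (M.acceptVec w i)

lemma acceptProb_eq_norm_sq (w : List α) :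
    M.acceptProb w = ‖WithLp.toLp 2 (M.acceptVec w)‖ ^ 2 := by
  simp [acceptProb, EuclideanSpace.norm_sq_eq, Complex.normSq_eq_norm_sq]

lemma acceptProb_nonneg (w : List α) : 0 ≤ M.acceptProb w :=
  Finset.sum_nonneg fun _ _ => Complex.normSq_nonneg _

lemma acceptVec_eq_zero_iff (w : List α) : M.acceptVec w = 0 ↔ M.acceptProb w = 0 := by
  rw [acceptProb_eq_norm_sq, sq_eq_zero_iff, norm_eq_zero, WithLp.toLp_eq_zero]

lemma isStarProjection_A : IsStarProjection M.A := ⟨M.A_idem, M.A_herm⟩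

lemma isStarProjection_N : IsStarProjection M.N := by
  rw [N, sub_sub]
  exact (M.isStarProjection_A.add ⟨M.R_idem, M.R_herm⟩ M.AR).one_sub

lemma norm_foldl_le (w : List α) (v : Fin M.d → ℂ) :
    ‖WithLp.toLp 2 (w.foldl (fun v a => (M.U a * M.N) *ᵥ v) v)‖ ≤ ‖WithLp.toLp 2 v‖ := by
  induction w generalizing v with
  | nil => exact le_rfl
  | cons a w ih =>
    refine (ih _).trans (norm_toLp_mulVec_le ?_ v)
    rw [CStarRing.norm_mem_unitary_mul _ (M.unitary a)]
    exact M.isStarProjection_N.norm_le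

lemma acceptProb_le_one (w : List α) : M.acceptProb w ≤ 1 := by
  have hinit : ‖WithLp.toLp 2 M.init‖ ^ 2 = 1 := by
    simpa [EuclideanSpace.norm_sq_eq, Complex.normSq_eq_norm_sq] using M.init_norm
  rw [acceptProb_eq_norm_sq, ← hinit, acceptVec]
  gcongr
  exact (norm_toLp_mulVec_le M.isStarProjection_A.norm_le _).trans (M.norm_foldl_le w _)

section Capacity

variable [Fintype α]

lemma capacity_eq : M.capacity = limsup
    (fun n : ℕ => (∑ w : Fin n → α, M.acceptProb (List.ofFn w)) ^ (1 / (n : ℝ))) atTop := rfl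

lemma sum_acceptProb_rpow_le (n : ℕ) :
    (∑ w : Fin n → α, M.acceptProb (List.ofFn w)) ^ (1 / (n : ℝ)) ≤ max 1 (Fintype.card α : ℝ) := by
  refine rpow_one_div_le_max_of_le_pow (Finset.sum_nonneg fun _ _ => M.acceptProb_nonneg _)
    (Nat.cast_nonneg _) ?_
  calc ∑ w : Fin n → α, M.acceptProb (List.ofFn w) ≤ ∑ _w : Fin n → α, 1 :=
        Finset.sum_le_sum fun w _ => M.acceptProb_le_one _
    _ = Fintype.card α ^ n := by simp

lemma capacity_nonneg : 0 ≤ M.capacity :=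
  le_limsup_of_frequently_le (Frequently.of_forall fun _ =>
    Real.rpow_nonneg (Finset.sum_nonneg fun _ _ => M.acceptProb_nonneg _) _)
    (isBoundedUnder_of ⟨_, M.sum_acceptProb_rpow_le⟩)

lemma capacity_le : M.capacity ≤ max 1 (Fintype.card α : ℝ) :=
  limsup_le_of_le (isCoboundedUnder_le_of_le atTop fun _ =>
    Real.rpow_nonneg (Finset.sum_nonneg fun _ _ => M.acceptProb_nonneg _) _)
    (Eventually.of_forall M.sum_acceptProb_rpow_le)

end Capacity

section OfFintype

variable {ι : Type*} [Fintype ι] [DecidableEq ι]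

noncomputable def ofFintype (U : α → Matrix ι ι ℂ) (hU : ∀ a, U a ∈ unitaryGroup ι ℂ)
    (init : ι → ℂ) (hinit : ∑ i, Complex.normSq (init i) = 1) (A R : Matrix ι ι ℂ)
    (hA : IsStarProjection A) (hR : IsStarProjection R) (hAR : A * R = 0) : KWQFA α where
  d := Fintype.card ι
  U a := reindexStarAlgEquiv (Fintype.equivFin ι) (U a)
  unitary a := Unitary.map_mem _ (hU a)
  init := init ∘ (Fintype.equivFin ι).symm
  init_norm := hinit ▸ (Fintype.equivFin ι).symm.sum_comp fun i => Complex.normSq (init i)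
  A := reindexStarAlgEquiv (Fintype.equivFin ι) A
  R := reindexStarAlgEquiv (Fintype.equivFin ι) R
  A_idem := (hA.map _).isIdempotentElem
  A_herm := (hA.map _).isSelfAdjoint
  R_idem := (hR.map _).isIdempotentElem
  R_herm := (hR.map _).isSelfAdjoint
  AR := by rw [← map_mul, hAR, map_zero]

lemma acceptProb_ofFintype (U : α → Matrix ι ι ℂ) (hU : ∀ a, U a ∈ unitaryGroup ι ℂ)
    (init : ι → ℂ) (hinit : ∑ i, Complex.normSq (init i) = 1) (A R : Matrix ι ι ℂ)
    (hA : IsStarProjection A) (hR : IsStarProjection R) (hAR : A * R = 0) (w : List α) :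
    (ofFintype U hU init hinit A R hA hR hAR).acceptProb w
      = ∑ i, Complex.normSq ((A *ᵥ w.foldl (fun v a => (U a * (1 - A - R)) *ᵥ v) init) i) := by
  set Q := ofFintype U hU init hinit A R hA hR hAR
  set e := Fintype.equivFin ι
  have hstep (v : ι → ℂ) (a : α) :
      (Q.U a * Q.N) *ᵥ (v ∘ e.symm) = ((U a * (1 - A - R)) *ᵥ v) ∘ e.symm := by
    have h := reindex_mulVec_comp_symm e (U a * (1 - A - R)) v
    rw [← coe_reindexStarAlgEquiv (R := ℂ), map_mul, map_sub, map_sub, map_one] at h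
    exact h
  set run := w.foldl (fun v a => (U a * (1 - A - R)) *ᵥ v) init
  calc Q.acceptProb w = ∑ i, Complex.normSq ((reindex e e A *ᵥ (run ∘ e.symm)) i) := by
        rw [← List.foldl_hom (g₂ := fun v a => (Q.U a * Q.N) *ᵥ v) (· ∘ e.symm) hstep]
        rfl
    _ = ∑ i, Complex.normSq ((A *ᵥ run) (e.symm i)) := by rw [reindex_mulVec_comp_symm]; rfl
    _ = ∑ i, Complex.normSq ((A *ᵥ run) i) := e.symm.sum_comp fun i => Complex.normSq _

end OfFintype

end KWQFA

lemma unitaryCapacity_nonneg {V : Type*} [Fintype V] (G : SimpleGraph V) :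
    0 ≤ unitaryCapacity G :=
  Real.sSup_nonneg fun _ ⟨M, _, hM⟩ => hM ▸ M.capacity_nonneg

lemma KWQFA.capacity_le_unitaryCapacity {V : Type*} [Fintype V] {G : SimpleGraph V}
    (M : KWQFA V) (hM : Distinguishable G M.accepts) : M.capacity ≤ unitaryCapacity G :=
  le_csSup ⟨max 1 (Fintype.card V : ℝ), fun _ ⟨M', _, h⟩ => h ▸ M'.capacity_le⟩ ⟨M, hM, rfl⟩

namespace RevPartialDFA

attribute [local instance] RevPartialDFA.fintype

open scoped Kronecker Classical

variable {V : Type*} (M : RevPartialDFA V)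

lemma eval_append (w : List V) (a : V) :
    M.eval (w ++ [a]) = (M.eval w).bind fun t => M.step t a := by
  rw [eval, List.foldl_append]
  rfl

lemma injective_step_elim (a : V) :
    Function.Injective fun t => (M.step t a).elim (Sum.inr t) Sum.inl := by
  intro t u htu
  rcases ht : M.step t a with _ | t' <;> rcases hu : M.step u a with _ | u' <;>
    simp only [ht, hu, Option.elim_none, Option.elim_some, Sum.inr.injEq, Sum.inl.injEq,
      reduceCtorEq] at htu
  · exact htu
  · exact M.reversible a t u t' ht (htu ▸ hu)

lemma exists_stepPerm (a : V) : ∃ g : Equiv.Perm (M.σ ⊕ M.σ),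
    ∀ t, g (Sum.inl t) = (M.step t a).elim (Sum.inr t) Sum.inl := by
  have hinj : (Set.range Sum.inl).InjOn (Sum.elim (fun t => (M.step t a).elim (Sum.inr t) Sum.inl)
      (Sum.inr : M.σ → M.σ ⊕ M.σ)) := by
    rintro _ ⟨t, rfl⟩ _ ⟨u, rfl⟩ h
    exact congrArg Sum.inl (M.injective_step_elim a h)
  obtain ⟨g, hg⟩ := hinj.exists_perm_extend
  exact ⟨g, fun t => hg _ ⟨t, rfl⟩⟩

noncomputable def stepPerm (a : V) : Equiv.Perm (M.σ ⊕ M.σ) := (M.exists_stepPerm a).choose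

lemma stepPerm_inl (a : V) (t : M.σ) :
    M.stepPerm a (Sum.inl t) = (M.step t a).elim (Sum.inr t) Sum.inl :=
  (M.exists_stepPerm a).choose_spec t

-- `σ.permMatrix` acts by `v ↦ v ∘ σ`, so it is the inverse that moves `x` to `stepPerm a x`.
noncomputable def stepUnitary (θ : ℝ) (a : V) :
    Matrix ((M.σ ⊕ M.σ) × Fin 2) ((M.σ ⊕ M.σ) × Fin 2) ℂ :=
  (M.stepPerm a)⁻¹.permMatrix ℂ ⊗ₖ !![(Real.cos θ : ℂ), -Real.sin θ; Real.sin θ, Real.cos θ]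

lemma stepUnitary_mem_unitaryGroup (θ : ℝ) (a : V) :
    M.stepUnitary θ a ∈ unitaryGroup ((M.σ ⊕ M.σ) × Fin 2) ℂ := by
  refine kronecker_mem_unitary ?_ (rotation_mem_unitaryGroup (Real.cos_sq_add_sin_sq θ))
  rw [Unitary.mem_iff, star_eq_conjTranspose, conjTranspose_permMatrix, ← permMatrix_mul,
    ← permMatrix_mul]
  simp

lemma stepUnitary_mulVec_single (θ : ℝ) (a : V) (x : M.σ ⊕ M.σ) (z : ℂ) :
    M.stepUnitary θ a *ᵥ Pi.single (x, 0) z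
      = Pi.single (M.stepPerm a x, 0) (Real.cos θ * z)
        + Pi.single (M.stepPerm a x, 1) (Real.sin θ * z) := by
  ext ⟨y, k⟩
  rw [mulVec_single]
  fin_cases k <;> by_cases hy : y = M.stepPerm a x <;>
    simp [stepUnitary, hy, Equiv.symm_apply_eq]

def liveSet : Set ((M.σ ⊕ M.σ) × Fin 2) := Set.range fun t => (Sum.inl t, 0)

def acceptSet : Set ((M.σ ⊕ M.σ) × Fin 2) := (fun t => (Sum.inl t, 1)) '' M.accept

lemma disjoint_acceptSet_liveSet : Disjoint M.acceptSet M.liveSet := by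
  rw [Set.disjoint_left]
  rintro _ ⟨t, -, rfl⟩ ⟨u, h⟩
  simp at h

noncomputable def toKWQFA (θ : ℝ) : KWQFA V :=
  KWQFA.ofFintype (M.stepUnitary θ) (M.stepUnitary_mem_unitaryGroup θ)
    (Pi.single (Sum.inl M.start, 0) 1)
    (by simp [Pi.single_apply]) (diagonal (M.acceptSet.indicator 1))
    (diagonal ((M.acceptSet ∪ M.liveSet)ᶜ.indicator 1)) (isStarProjection_diagonal_indicator _)
    (isStarProjection_diagonal_indicator _) (by
      rw [diagonal_indicator_mul, Set.compl_union, ← Set.inter_assoc, Set.inter_compl_self,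
        Set.empty_inter, Set.indicator_empty, diagonal_zero])

noncomputable def runVec (θ : ℝ) (w : List V) : (M.σ ⊕ M.σ) × Fin 2 → ℂ :=
  w.foldl (fun v a => (M.stepUnitary θ a * diagonal (M.liveSet.indicator 1)) *ᵥ v)
    (Pi.single (Sum.inl M.start, 0) 1)

lemma acceptProb_toKWQFA_eq (θ : ℝ) (w : List V) : (M.toKWQFA θ).acceptProb w
    = ∑ i, Complex.normSq ((diagonal (M.acceptSet.indicator 1) *ᵥ M.runVec θ w) i) := by
  rw [toKWQFA, KWQFA.acceptProb_ofFintype,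
    one_sub_diagonal_indicator_sub M.disjoint_acceptSet_liveSet]
  rfl

lemma runVec_append (θ : ℝ) (w : List V) (a : V) :
    M.runVec θ (w ++ [a])
      = M.stepUnitary θ a *ᵥ diagonal (M.liveSet.indicator 1) *ᵥ M.runVec θ w := by
  rw [runVec, List.foldl_append]
  simp [runVec, mulVec_mulVec]

lemma live_mulVec_runVec (θ : ℝ) (w : List V) :
    diagonal (M.liveSet.indicator 1) *ᵥ M.runVec θ w
      = (M.eval w).elim 0 fun t => Pi.single (Sum.inl t, 0) (Real.cos θ ^ w.length) := by
  induction w using List.reverseRecOn with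
  | nil =>
    simp [runVec, eval, liveSet]
  | append_singleton w a ih =>
    rw [runVec_append, ih, eval_append]
    rcases M.eval w with _ | t
    · simp
    · rw [Option.elim_some, Option.bind_some, stepUnitary_mulVec_single, mulVec_add,
        diagonal_mulVec_single, diagonal_mulVec_single, stepPerm_inl]
      rcases M.step t a with _ | t' <;> simp [liveSet, pow_succ, mul_comm]

lemma acceptProb_toKWQFA_nil (θ : ℝ) : (M.toKWQFA θ).acceptProb [] = 0 := by
  simp [acceptProb_toKWQFA_eq, runVec, acceptSet]

lemma acceptProb_toKWQFA_append (θ : ℝ) (w : List V) (a : V) :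
    (M.toKWQFA θ).acceptProb (w ++ [a])
      = if w ++ [a] ∈ M.accepts then (Real.cos θ ^ 2) ^ w.length * Real.sin θ ^ 2 else 0 := by
  simp only [acceptProb_toKWQFA_eq, runVec_append, live_mulVec_runVec, accepts, Set.mem_ofPred_eq,
    eval_append]
  rcases M.eval w with _ | t
  · simp
  rw [Option.elim_some, Option.bind_some, stepUnitary_mulVec_single, mulVec_add,
    diagonal_mulVec_single, diagonal_mulVec_single, stepPerm_inl]
  rcases M.step t a with _ | t'
  · simp [acceptSet]
  by_cases ht' : t' ∈ M.accept
  · simp [acceptSet, ht', Pi.single_apply, apply_ite, Complex.normSq_mul, Complex.normSq_ofReal,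
      -Complex.ofReal_sin, -Complex.ofReal_cos]
    ring
  · simp [acceptSet, ht']

lemma accepts_toKWQFA_subset (θ : ℝ) : (M.toKWQFA θ).accepts ⊆ M.accepts := by
  intro w hw
  rw [KWQFA.accepts, Set.mem_ofPred_eq, Ne, KWQFA.acceptVec_eq_zero_iff] at hw
  rcases w.eq_nil_or_concat with rfl | ⟨w, a, rfl⟩
  · exact absurd (M.acceptProb_toKWQFA_nil θ) hw
  · by_contra h
    rw [List.concat_eq_append] at hw h
    exact hw (by rw [acceptProb_toKWQFA_append, if_neg h])

lemma sum_acceptProb_toKWQFA [Fintype V] (θ : ℝ) {n : ℕ} (hn : n ≠ 0) :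
    ∑ f : Fin n → V, (M.toKWQFA θ).acceptProb (List.ofFn f)
      = {w ∈ M.accepts | w.length = n}.ncard * ((Real.cos θ ^ 2) ^ (n - 1) * Real.sin θ ^ 2) := by
  rw [← sum_ofFn_ite_mem]
  refine Finset.sum_congr rfl fun f _ => ?_
  obtain ⟨w, a, hw⟩ := (List.ofFn f).eq_nil_or_concat.resolve_left (by simpa using hn)
  rw [List.concat_eq_append] at hw
  have hlen : w.length = n - 1 := by
    have := congrArg List.length hw
    rw [List.length_ofFn, List.length_append, List.length_singleton] at this
    omega
  rw [hw, acceptProb_toKWQFA_append, hlen]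

lemma growthRate_mul_le_capacity_toKWQFA [Fintype V] {θ : ℝ} (hc : Real.cos θ ≠ 0)
    (hs : Real.sin θ ≠ 0) :
    growthRate M.accepts * Real.cos θ ^ 2 ≤ (M.toKWQFA θ).capacity := by
  set u : ℕ → ℝ := fun n => ({w ∈ M.accepts | w.length = n}.ncard : ℝ) ^ (1 / (n : ℝ))
  set v : ℕ → ℝ := fun n => ((Real.cos θ ^ 2) ^ (n - 1) * Real.sin θ ^ 2) ^ (1 / (n : ℝ))
  have hv : Tendsto v atTop (𝓝 (Real.cos θ ^ 2)) :=
    tendsto_pow_pred_mul_rpow_one_div (by positivity) (by positivity)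
  have hcap : (M.toKWQFA θ).capacity = limsup (u * v) atTop := by
    rw [KWQFA.capacity_eq]
    refine limsup_congr ?_
    filter_upwards [eventually_ne_atTop 0] with n hn
    rw [sum_acceptProb_toKWQFA M θ hn, Real.mul_rpow (by positivity) (by positivity)]
    rfl
  have hu : IsBoundedUnder (· ≤ ·) atTop u := isBoundedUnder_of
    ⟨max 1 (Fintype.card V : ℝ), fun n => rpow_one_div_le_max_of_le_pow (Nat.cast_nonneg _)
      (Nat.cast_nonneg _) (ncard_length_eq_le _ n)⟩
  rw [hcap, ← hv.liminf_eq]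
  exact le_limsup_mul (Frequently.of_forall fun _ => by positivity) hu
    (Eventually.of_forall fun _ => by positivity) hv.isBoundedUnder_le

end RevPartialDFA

/-- the unitary capacity is at least the reversible capacity. -/
theorem revCapacity_le_unitaryCapacity {V : Type*} [Fintype V] (G : SimpleGraph V) :
    revCapacity G ≤ unitaryCapacity G := by
  refine Real.sSup_le ?_ (unitaryCapacity_nonneg G)
  rintro _ ⟨M, hM, rfl⟩
  have hlim : Tendsto (fun θ => growthRate M.accepts * Real.cos θ ^ 2) (𝓝[>] 0)
      (𝓝 (growthRate M.accepts)) := by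
    have : Continuous fun θ => growthRate M.accepts * Real.cos θ ^ 2 := by fun_prop
    simpa using (this.tendsto 0).mono_left nhdsWithin_le_nhds
  refine le_of_tendsto hlim ?_
  filter_upwards [Ioo_mem_nhdsGT Real.pi_div_two_pos] with θ ⟨hθ₀, hθ₁⟩
  calc growthRate M.accepts * Real.cos θ ^ 2 ≤ (M.toKWQFA θ).capacity :=
        M.growthRate_mul_le_capacity_toKWQFA
          (Real.cos_pos_of_mem_Ioo ⟨by linarith [Real.pi_pos], hθ₁⟩).ne'
          (Real.sin_pos_of_pos_of_lt_pi hθ₀ (by linarith [Real.pi_pos])).ne'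
    _ ≤ unitaryCapacity G :=
        (M.toKWQFA θ).capacity_le_unitaryCapacity (hM.mono (M.accepts_toKWQFA_subset θ))
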